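/- arXiv:math/0211083 — 3 statements merged into one kernel-verified Lean document; each statement's English description precedes it below -/
import Mathlib

section
/- Let a be a positive integer which is not a perfect h-th power for any h ≥ 2. Fix integers f ≥ 1, l ≥ 0, set k = 2^f(4l+1) with radical k0, let n ≥ 1 be squarefree and let d | k0 with d even. Then for each j ∈ {1,3} there is no field automorphism σ* of G̃_{k,n,d} fixing G_{k,n,d} pointwise with σ*(ζ_{2^{f+2}}) = ζ_{2^{f+2}}^{1+j·2^f}. The same holds with k' = 2^f(4l+3) and its radical k0' in place of k and k0. -/
open scoped Classical
open IntermediateField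

/-- `zet m = ζ_m = exp(2πi/m)`. -/
noncomputable def zet (m : ℕ) : ℂ := Complex.exp (2 * Real.pi * Complex.I / m)

/-- `rootC a u`: the real positive `u`-th root of `a`, regarded as a complex number. -/
noncomputable def rootC (a u : ℕ) : ℂ := (((a : ℝ) ^ ((u : ℝ)⁻¹) : ℝ) : ℂ)

/-- `HasSigmaExt G Gt z w`: there is an automorphism of `Gt` fixing `G` pointwise and
sending the element of `Gt` with value `z` to the element with value `w`. -/
def HasSigmaExt (G Gt : IntermediateField ℚ ℂ) (z w : ℂ) : Prop :=
  ∃ σ : Gt ≃ₐ[ℚ] Gt, (∀ x : Gt, (x : ℂ) ∈ G → σ x = x) ∧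
    ∀ x : Gt, (x : ℂ) = z → (σ x : ℂ) = w

lemma zet_ne_zero (m : ℕ) : zet m ≠ 0 := Complex.exp_ne_zero _

lemma zet_pow (m t : ℕ) : zet m ^ t = Complex.exp (t * (2 * Real.pi * Complex.I / m)) := by
  rw [zet, ← Complex.exp_nat_mul]

lemma zet_pow_div (m t q : ℕ) (hm : m ≠ 0) (hq : m = q * t) :
    zet m ^ t = zet q := by
  have hq0 : (q : ℂ) ≠ 0 := by
    rintro h; apply hm; rw [hq]; simp [Nat.cast_eq_zero.mp (by exact_mod_cast h)]
  have ht0 : (t : ℂ) ≠ 0 := by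
    rintro h; apply hm; rw [hq]; simp [Nat.cast_eq_zero.mp (by exact_mod_cast h)]
  have hm0 : (m : ℂ) ≠ 0 := Nat.cast_ne_zero.mpr hm
  have hmc : (m : ℂ) = q * t := by exact_mod_cast hq
  rw [zet_pow, zet]
  congr 1
  field_simp [hmc]
  rw [hmc]; ring

lemma zet_two_pow_neg_one (f : ℕ) : zet (2 ^ (f + 2)) ^ (2 ^ (f + 1)) = -1 := by
  have h : zet (2 ^ (f + 2)) ^ (2 ^ (f + 1)) = zet 2 := by
    apply zet_pow_div _ _ _ (by positivity)
    rw [pow_succ, pow_succ, mul_comm]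
  rw [h, zet]
  simp only [Nat.cast_ofNat]
  rw [show (2 * Real.pi * Complex.I / 2 : ℂ) = Real.pi * Complex.I by ring]
  exact Complex.exp_pi_mul_I

/-- If `d` is even then neither `σ_1` nor `σ_3` extends to an automorphism of
`G̃_{k,n,d}` over `G_{k,n,d}`, i.e. `c^{(1)}(k,n,d) = c^{(3)}(k,n,d) = 0`. Here
`k = 2^f(4l+ε)` with `ε ∈ {1,3}`. -/
theorem no_sigma_extension_of_even (a : ℕ) (ha : 0 < a)
    (hpow : ∀ h, 2 ≤ h → ¬∃ b : ℕ, b ^ h = a)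
    (f l : ℕ) (hf : 1 ≤ f) (ε : ℕ) (hε : ε = 1 ∨ ε = 3)
    (k : ℕ) (hk : k = 2 ^ f * (4 * l + ε))
    (n d : ℕ) (hn : Squarefree n) (hd : d ∣ ∏ p ∈ k.primeFactors, p)
    (hdeven : Even d)
    (G Gt : IntermediateField ℚ ℂ)
    (hG : G = IntermediateField.adjoin ℚ {rootC a (k * n), zet n, zet (k * d)})
    (hGt : Gt = IntermediateField.adjoin ℚ
      {rootC a (k * n), zet n, zet (k * d), zet (2 ^ (f + 2))}) :
    ∀ j ∈ ({1, 3} : Set ℕ),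
      ¬ HasSigmaExt G Gt (zet (2 ^ (f + 2))) (zet (2 ^ (f + 2)) ^ (1 + j * 2 ^ f)) := by
  intro j hj hσ
  obtain ⟨σ, hfix, hsend⟩ := hσ
  -- basic nonvanishing
  have hk0 : k ≠ 0 := by
    rcases hε with rfl | rfl <;> subst hk <;> positivity
  have hd0 : d ≠ 0 := by
    rintro rfl
    have : (∏ p ∈ k.primeFactors, p) = 0 := Nat.eq_zero_of_zero_dvd hd
    have hpos : 0 < ∏ p ∈ k.primeFactors, p :=
      Finset.prod_pos fun p hp => (Nat.prime_of_mem_primeFactors hp).pos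
    omega
  have hkd0 : k * d ≠ 0 := Nat.mul_ne_zero hk0 hd0
  -- 2^(f+1) divides k*d
  obtain ⟨e, he⟩ := hdeven
  have hdvd : 2 ^ (f + 1) ∣ k * d := by
    have h2k : 2 ^ f ∣ k := hk ▸ Dvd.intro _ rfl
    have h2d : 2 ∣ d := ⟨e, by omega⟩
    have := mul_dvd_mul h2k h2d
    rwa [← pow_succ] at this
  obtain ⟨q, hq⟩ := hdvd
  -- ζ_{2^{f+1}} ∈ G
  have hzkdG : zet (k * d) ∈ G := by
    rw [hG]; exact subset_adjoin ℚ _ (by simp)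
  have hzG : zet (2 ^ (f + 1)) ∈ G := by
    have : zet (k * d) ^ q = zet (2 ^ (f + 1)) :=
      zet_pow_div _ _ _ hkd0 hq
    exact this ▸ pow_mem hzkdG q
  have hGle : G ≤ Gt := by
    rw [hG, hGt]
    apply IntermediateField.adjoin.mono
    intro x hx
    simp only [Set.mem_insert_iff, Set.mem_singleton_iff] at hx ⊢
    tauto
  have hzGt : zet (2 ^ (f + 1)) ∈ Gt := hGle hzG
  have hyGt : zet (2 ^ (f + 2)) ∈ Gt := by
    rw [hGt]; exact subset_adjoin ℚ _ (by simp)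
  set z : ℂ := zet (2 ^ (f + 2)) with hz
  set y : Gt := ⟨z, hyGt⟩ with hy
  set x : Gt := ⟨zet (2 ^ (f + 1)), hzGt⟩ with hx
  -- key identities
  have hsq : z ^ 2 = zet (2 ^ (f + 1)) := by
    apply zet_pow_div _ _ _ (by positivity)
    rw [pow_succ]
  have hneg : z ^ (2 ^ (f + 1)) = -1 := zet_two_pow_neg_one f
  have hxy : x = y ^ 2 := by
    apply Subtype.ext
    push_cast
    exact hsq.symm
  have hσx : σ x = x := hfix x hzG
  have hσy : (σ y : ℂ) = z ^ (1 + j * 2 ^ f) := hsend y rfl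
  -- compute (σ x : ℂ) two ways
  have h1 : (σ x : ℂ) = zet (2 ^ (f + 1)) := by rw [hσx]
  have h2 : (σ x : ℂ) = (σ y : ℂ) ^ 2 := by
    rw [hxy, map_pow]; push_cast; ring
  have hj' : j = 1 ∨ j = 3 := by
    simpa [Set.mem_insert_iff] using hj
  have h3 : (σ y : ℂ) ^ 2 = -zet (2 ^ (f + 1)) := by
    rw [hσy, ← pow_mul]
    have harith : 2 * (1 + j * 2 ^ f) = 2 + j * 2 ^ (f + 1) := by
      rw [pow_succ]; ring
    rw [mul_comm, harith, pow_add, mul_comm j, pow_mul, hneg]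
    rcases hj' with rfl | rfl <;> rw [hsq] <;> ring
  have heq : zet (2 ^ (f + 1)) = -zet (2 ^ (f + 1)) := h1.symm.trans (h2.trans h3)
  have hzero : zet (2 ^ (f + 1)) = 0 := by linear_combination heq / 2
  exact zet_ne_zero _ hzero
end

section
/- Let a be a positive integer which is not a perfect h-th power for any h ≥ 2. Fix integers f ≥ 1, l ≥ 0, set k = 2^f(4l+1) with radical k0, let n ≥ 1 be squarefree and let d | k0 with d odd. If [G̃_{k,n,d} : G_{k,n,d}] = 4, then for each j ∈ {1,3} there exists a field automorphism σ* of G̃_{k,n,d} fixing G_{k,n,d} pointwise with σ*(ζ_{2^{f+2}}) = ζ_{2^{f+2}}^{1+j·2^f}. The same holds with k' = 2^f(4l+3) and its radical k0' in place of k and k0. -/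
open scoped Classical
open IntermediateField

lemma zet_mul_pow (m q : ℕ) (hm : m ≠ 0) (hq : q ≠ 0) : zet (m * q) ^ q = zet m := by
  unfold zet
  rw [← Complex.exp_nat_mul]
  congr 1
  have hmC : (m:ℂ) ≠ 0 := Nat.cast_ne_zero.2 hm
  have hqC : (q:ℂ) ≠ 0 := Nat.cast_ne_zero.2 hq
  push_cast
  field_simp

lemma zet_pow_self (m : ℕ) (hm : m ≠ 0) : zet m ^ m = 1 :=
  (Complex.isPrimitiveRoot_exp m hm).pow_eq_one

lemma zet_isIntegral (m : ℕ) (hm : m ≠ 0) : IsIntegral ℚ (zet m) := by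
  refine (IsAlgebraic.isIntegral ⟨Polynomial.X ^ m - Polynomial.C 1, ?_, ?_⟩)
  · exact (Polynomial.monic_X_pow_sub_C _ hm).ne_zero
  · simp [zet_pow_self m hm]

lemma rootC_isIntegral (a u : ℕ) (ha : 0 < a) (hu : u ≠ 0) : IsIntegral ℚ (rootC a u) := by
  have key : rootC a u ^ u = (a : ℂ) := by
    unfold rootC
    norm_cast
    exact_mod_cast congrArg (Complex.ofReal) (Real.rpow_inv_natCast_pow (by positivity) hu)
  refine (IsAlgebraic.isIntegral ⟨Polynomial.X ^ u - Polynomial.C (a:ℚ), ?_, ?_⟩)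
  · exact (Polynomial.monic_X_pow_sub_C _ hu).ne_zero
  · simp [key]

set_option maxHeartbeats 4000000 in
set_option synthInstance.maxHeartbeats 400000 in
/-- If `d` is odd and `[G̃_{k,n,d} : G_{k,n,d}] = 4`, then both `σ_1` and `σ_3`
extend to automorphisms of `G̃_{k,n,d}` over `G_{k,n,d}`, i.e.
`c^{(1)}(k,n,d) = c^{(3)}(k,n,d) = 1`. Here `k = 2^f(4l+ε)` with `ε ∈ {1,3}`. -/
theorem sigma_extension_of_degree_four (a : ℕ) (ha : 0 < a)
    (hpow : ∀ h, 2 ≤ h → ¬∃ b : ℕ, b ^ h = a)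
    (f l : ℕ) (hf : 1 ≤ f) (ε : ℕ) (hε : ε = 1 ∨ ε = 3)
    (k : ℕ) (hk : k = 2 ^ f * (4 * l + ε))
    (n d : ℕ) (hn : Squarefree n) (hd : d ∣ ∏ p ∈ k.primeFactors, p)
    (hdodd : Odd d)
    (G Gt : IntermediateField ℚ ℂ)
    (hG : G = IntermediateField.adjoin ℚ {rootC a (k * n), zet n, zet (k * d)})
    (hGt : Gt = IntermediateField.adjoin ℚ
      {rootC a (k * n), zet n, zet (k * d), zet (2 ^ (f + 2))})
    (hdeg : Module.finrank ℚ Gt = 4 * Module.finrank ℚ G) :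
    ∀ j ∈ ({1, 3} : Set ℕ),
      HasSigmaExt G Gt (zet (2 ^ (f + 2))) (zet (2 ^ (f + 2)) ^ (1 + j * 2 ^ f)) := by
  intro j hj
  -- numerics
  have hd0 : d ≠ 0 := by rintro rfl; simp [Nat.odd_iff] at hdodd
  have hn0 : n ≠ 0 := hn.ne_zero
  have hε1 : 1 ≤ ε := by rcases hε with rfl | rfl <;> norm_num
  have hk0 : k ≠ 0 := by
    rw [hk]; positivity
  have hkn0 : k * n ≠ 0 := mul_ne_zero hk0 hn0
  have hkd0 : k * d ≠ 0 := mul_ne_zero hk0 hd0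
  have hN0 : (2:ℕ) ^ (f + 2) ≠ 0 := by positivity
  set ζ : ℂ := zet (2 ^ (f + 2)) with hζdef
  have hζprim : IsPrimitiveRoot ζ (2 ^ (f + 2)) := Complex.isPrimitiveRoot_exp _ hN0
  -- basic memberships
  have hle : G ≤ Gt := by
    rw [hG, hGt]
    apply IntermediateField.adjoin.mono
    intro z hz
    simp only [Set.mem_insert_iff, Set.mem_singleton_iff] at hz ⊢
    tauto
  have hζGt : ζ ∈ Gt := by
    rw [hGt]
    exact IntermediateField.subset_adjoin ℚ _ (by simp)
  have hζ4 : ζ ^ 4 = zet (2 ^ f) := by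
    have h1 : (2:ℕ) ^ (f + 2) = 2 ^ f * 4 := by ring
    rw [hζdef, h1]
    exact zet_mul_pow _ 4 (by positivity) (by norm_num)
  have hzf_mem : zet (2 ^ f) ∈ G := by
    have h2 : k * d = 2 ^ f * ((4 * l + ε) * d) := by rw [hk]; ring
    have h3 : zet (k * d) ^ ((4 * l + ε) * d) = zet (2 ^ f) := by
      rw [h2]; exact zet_mul_pow _ _ (by positivity) (by positivity)
    rw [← h3]
    exact pow_mem (hG ▸ IntermediateField.subset_adjoin ℚ _ (by simp)) _
  have hζ4G : ζ ^ 4 ∈ G := hζ4 ▸ hzf_mem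
  -- finite dimensionality
  have hfinGt : FiniteDimensional ℚ Gt := by
    rw [hGt]
    haveI : Finite ({rootC a (k * n), zet n, zet (k * d), zet (2 ^ (f + 2))} : Set ℂ) :=
      (((Set.finite_singleton _).insert _).insert _ |>.insert _).to_subtype
    apply IntermediateField.finiteDimensional_adjoin
    intro z hz
    simp only [Set.mem_insert_iff, Set.mem_singleton_iff] at hz
    rcases hz with rfl | rfl | rfl | rfl
    · exact rootC_isIntegral a (k*n) ha hkn0
    · exact zet_isIntegral n hn0
    · exact zet_isIntegral (k*d) hkd0
    · exact zet_isIntegral _ hN0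
  have hfinG : FiniteDimensional ℚ G := by
    rw [hG]
    haveI : Finite ({rootC a (k * n), zet n, zet (k * d)} : Set ℂ) :=
      (((Set.finite_singleton _).insert _).insert _).to_subtype
    apply IntermediateField.finiteDimensional_adjoin
    intro z hz
    simp only [Set.mem_insert_iff, Set.mem_singleton_iff] at hz
    rcases hz with rfl | rfl | rfl
    · exact rootC_isIntegral a (k*n) ha hkn0
    · exact zet_isIntegral n hn0
    · exact zet_isIntegral (k*d) hkd0
  -- tower
  letI : Algebra G Gt := (IntermediateField.inclusion hle).toRingHom.toAlgebra
  haveI hTower : IsScalarTower ℚ G Gt :=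
    IsScalarTower.of_algebraMap_eq (R := ℚ) (S := ↥G) (A := ↥Gt) (fun q => Subtype.ext rfl)
  haveI hfinKGt : FiniteDimensional G Gt := FiniteDimensional.right ℚ G Gt
  have hfr : Module.finrank G Gt = 4 := by
    have hmul := Module.finrank_mul_finrank ℚ G Gt
    have hpos : 0 < Module.finrank ℚ G := Module.finrank_pos
    have : Module.finrank ℚ G * Module.finrank G Gt = Module.finrank ℚ G * 4 := by
      rw [hmul, hdeg]; ring
    exact Nat.eq_of_mul_eq_mul_left hpos this
  -- the generator
  set x : Gt := (⟨ζ, hζGt⟩ : Gt) with hxdef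
  have hxval : (x : ℂ) = ζ := rfl
  have hxint : IsIntegral G x := IsIntegral.of_finite G x
  set A : Subalgebra G Gt := Algebra.adjoin G ({x} : Set Gt) with hAdef
  have hAinv : ∀ w : Gt, w ∈ A → w⁻¹ ∈ A := by
    intro w hw
    exact A.inv_mem_of_algebraic (x := ⟨w, hw⟩) ((IsIntegral.of_finite G w).isAlgebraic)
  -- the image of A in ℂ is an intermediate field
  let A' : IntermediateField ℚ ℂ :=
    { (A.restrictScalars ℚ).map Gt.val with
      inv_mem' := by
        rintro z hz
        obtain ⟨w, hw, rfl⟩ := hz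
        refine ⟨w⁻¹, ?_, ?_⟩
        · exact (Subalgebra.mem_restrictScalars ℚ).2
            (hAinv w ((Subalgebra.mem_restrictScalars ℚ).1 hw))
        · exact map_inv₀ Gt.val w }
  have hGA' : ∀ z, z ∈ G → z ∈ A' := by
    intro z hz
    exact ⟨algebraMap G Gt ⟨z, hz⟩,
      (Subalgebra.mem_restrictScalars ℚ).2 (A.algebraMap_mem _), rfl⟩
  have hζA' : ζ ∈ A' :=
    ⟨x, (Subalgebra.mem_restrictScalars ℚ).2 (Algebra.subset_adjoin rfl), rfl⟩
  have hGtA' : Gt ≤ A' := by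
    rw [hGt, IntermediateField.adjoin_le_iff]
    intro z hz
    simp only [Set.mem_insert_iff, Set.mem_singleton_iff] at hz
    rcases hz with rfl | rfl | rfl | rfl
    · exact hGA' _ (hG ▸ IntermediateField.subset_adjoin ℚ _ (by simp))
    · exact hGA' _ (hG ▸ IntermediateField.subset_adjoin ℚ _ (by simp))
    · exact hGA' _ (hG ▸ IntermediateField.subset_adjoin ℚ _ (by simp))
    · exact hζA'
  have htop : A = ⊤ := by
    rw [eq_top_iff]
    rintro w -
    obtain ⟨w', hw', hval⟩ := hGtA' w.2
    have hww : w' = w := Subtype.ext hval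
    rw [← hww]
    exact (Subalgebra.mem_restrictScalars ℚ).1 hw'
  -- power basis
  let e : A ≃ₐ[G] Gt := (Subalgebra.equivOfEq A ⊤ htop).trans Subalgebra.topEquiv
  let pb : PowerBasis G Gt := (Algebra.adjoin.powerBasis hxint).map e
  have hgen : pb.gen = x := by
    simp [pb, e]
  have hdim4 : (minpoly G x).natDegree = 4 := by
    have h1 := pb.finrank
    have h2 : pb.dim = (minpoly G x).natDegree := by simp [pb]
    omega
  -- the minimal polynomial
  set c : G := (⟨ζ ^ 4, hζ4G⟩ : G) with hcdef
  have hcx : algebraMap G Gt c = x ^ 4 := by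
    apply Subtype.ext
    push_cast
    rfl
  have hpmonic : (Polynomial.X ^ 4 - Polynomial.C c).Monic :=
    Polynomial.monic_X_pow_sub_C c (by norm_num)
  have hproot : Polynomial.aeval x (Polynomial.X ^ 4 - Polynomial.C c) = 0 := by
    rw [map_sub, Polynomial.aeval_X_pow, Polynomial.aeval_C, hcx, sub_self]
  have hmp : minpoly G x = Polynomial.X ^ 4 - Polynomial.C c := by
    obtain ⟨q, hq⟩ := minpoly.dvd G x hproot
    have hmm := minpoly.monic hxint
    have hqm : q.Monic := hmm.of_mul_monic_left (hq ▸ hpmonic)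
    have hnd : (Polynomial.X ^ 4 - Polynomial.C c).natDegree = 4 :=
      Polynomial.natDegree_X_pow_sub_C
    have hmul := Polynomial.natDegree_mul hmm.ne_zero hqm.ne_zero
    rw [← hq] at hmul
    have hq0 : q.natDegree = 0 := by omega
    rw [hq, hqm.natDegree_eq_zero.1 hq0, mul_one]
  -- the root x ^ u
  set u := 1 + j * 2 ^ f with hudef
  have hζu4 : (ζ ^ u) ^ 4 = ζ ^ 4 := by
    have h24 : u * 4 = 4 + 2 ^ (f + 2) * j := by
      have : (2:ℕ) ^ (f + 2) = 2 ^ f * 4 := by ring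
      rw [hudef, this]; ring
    rw [← pow_mul, h24, pow_add, pow_mul, hζprim.pow_eq_one, one_pow, mul_one]
  have hxu4 : (x ^ u) ^ 4 = x ^ 4 := by
    apply Subtype.ext
    push_cast
    exact hζu4
  have hyroot : Polynomial.aeval (x ^ u) (minpoly G pb.gen) = 0 := by
    rw [hgen, hmp, map_sub, Polynomial.aeval_X_pow, Polynomial.aeval_C, hcx, hxu4, sub_self]
  -- the automorphism
  let σ0 : Gt →ₐ[G] Gt := pb.lift (x ^ u) hyroot
  have hinj : Function.Injective σ0 := σ0.toRingHom.injective
  have hbij : Function.Bijective σ0 :=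
    ⟨hinj, (LinearMap.injective_iff_surjective (f := σ0.toLinearMap)).1 hinj⟩
  let σ : Gt ≃ₐ[G] Gt := AlgEquiv.ofBijective σ0 hbij
  refine ⟨σ.restrictScalars ℚ, ?_, ?_⟩
  · intro w hw
    have hw' : w = algebraMap G Gt ⟨(w:ℂ), hw⟩ := Subtype.ext rfl
    show σ0 w = w
    conv_lhs => rw [hw']
    rw [σ0.commutes, ← hw']
  · intro w hw
    have hwx : w = x := Subtype.ext hw
    show ((σ0 w : Gt) : ℂ) = ζ ^ u
    rw [hwx, ← hgen, PowerBasis.lift_gen]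
    push_cast
    rfl
end

section
/- Let a be a positive integer which is not a perfect h-th power for any h ≥ 2. Fix integers f ≥ 2, l ≥ 0, set k = 2^f(4l+1) with radical k0, let n ≥ 1 be squarefree and let d | k0 with d odd. Then there exists a field automorphism of G̃_{k,n,d} fixing G_{k,n,d} pointwise and sending ζ_{2^{f+2}} to ζ_{2^{f+2}}^{1+2^f} if and only if there exists one fixing G_{k,n,d} pointwise and sending ζ_{2^{f+2}} to ζ_{2^{f+2}}^{1+3·2^f}. The same holds with k' = 2^f(4l+3) and its radical k0' in place of k and k0. -/
open scoped Classical
open IntermediateField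

/-- Complex conjugation as a `ℚ`-algebra automorphism of `ℂ`. -/
noncomputable def conjQ : ℂ ≃ₐ[ℚ] ℂ := Complex.conjAe.restrictScalars ℚ

lemma conjQ_apply (z : ℂ) : conjQ z = (starRingEnd ℂ) z := rfl

lemma conj_zet (m : ℕ) : (starRingEnd ℂ) (zet m) = (zet m)⁻¹ := by
  rw [zet, ← Complex.exp_conj, ← Complex.exp_neg]
  congr 1
  simp only [map_div₀, map_mul, Complex.conj_I, Complex.conj_natCast, map_ofNat,
    Complex.conj_ofReal]
  ring

lemma conj_rootC (a u : ℕ) : (starRingEnd ℂ) (rootC a u) = rootC a u := by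
  simp [rootC, Complex.conj_ofReal]

/-- If a set of generators is conjugation-stable (inside the generated field),
then the generated intermediate field is conjugation-stable. -/
lemma map_conjQ_adjoin_eq (S : Set ℂ)
    (h : ∀ s ∈ S, (starRingEnd ℂ) s ∈ adjoin ℚ S) :
    (adjoin ℚ S).map conjQ.toAlgHom = adjoin ℚ S := by
  have hle : (adjoin ℚ S).map conjQ.toAlgHom ≤ adjoin ℚ S := by
    rw [adjoin_map]
    refine adjoin_le_iff.mpr ?_
    rintro x ⟨s, hs, rfl⟩
    exact h s hs
  refine le_antisymm hle ?_
  have h2 := IntermediateField.map_map (adjoin ℚ S) conjQ.toAlgHom conjQ.toAlgHom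
  have hcomp : conjQ.toAlgHom.comp conjQ.toAlgHom = AlgHom.id ℚ ℂ := by
    ext z
    simp [conjQ_apply]
  have h3 : ((adjoin ℚ S).map conjQ.toAlgHom).map conjQ.toAlgHom = adjoin ℚ S := by
    rw [h2, hcomp, IntermediateField.map_id]
  calc adjoin ℚ S = ((adjoin ℚ S).map conjQ.toAlgHom).map conjQ.toAlgHom := h3.symm
    _ ≤ (adjoin ℚ S).map conjQ.toAlgHom :=
        IntermediateField.map_mono _ hle

/-- The key transfer lemma: if conjugation stabilizes `G` and `Gt`, `z ∈ Gt` is a root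
of unity of order dividing `N`, and `e1 * e2 ≡ 1 (mod N)`, then an automorphism sending
`z ↦ z ^ e1` over `G` yields one sending `z ↦ z ^ e2` over `G`. -/
lemma hasSigmaExt_flip (G Gt : IntermediateField ℚ ℂ)
    (hGc : G.map conjQ.toAlgHom = G) (hGtc : Gt.map conjQ.toAlgHom = Gt)
    (z : ℂ) (hz : z ∈ Gt) (N : ℕ) (hN : 0 < N) (hzN : z ^ N = 1)
    (e1 e2 t : ℕ) (ht : e1 * e2 = 1 + N * t) :
    HasSigmaExt G Gt z (z ^ e1) → HasSigmaExt G Gt z (z ^ e2) := by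
  rintro ⟨σ, hfix, hmap⟩
  -- conjugation as an automorphism of Gt
  have hc : ∀ x : Gt, (starRingEnd ℂ) (x : ℂ) ∈ Gt := by
    intro x
    have : conjQ.toAlgHom (x : ℂ) ∈ Gt.map conjQ.toAlgHom := ⟨x, x.2, rfl⟩
    rwa [hGtc] at this
  have hcG : ∀ w : ℂ, w ∈ G → (starRingEnd ℂ) w ∈ G := by
    intro w hw
    have : conjQ.toAlgHom w ∈ G.map conjQ.toAlgHom := ⟨w, hw, rfl⟩
    rwa [hGc] at this
  let c : Gt ≃ₐ[ℚ] Gt :=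
    (intermediateFieldMap conjQ Gt).trans (equivOfEq hGtc)
  have hcval : ∀ x : Gt, (c x : ℂ) = (starRingEnd ℂ) (x : ℂ) := by
    intro x
    rfl
  -- basic facts about z
  have hz0 : z ≠ 0 := by
    intro h
    rw [h, zero_pow hN.ne'] at hzN
    exact zero_ne_one hzN
  have habs : ‖z‖ = 1 := by
    have h1 : ‖z‖ ^ N = 1 := by
      rw [← norm_pow, hzN, norm_one]
    have h2 := norm_nonneg z
    rcases pow_eq_one_iff_cases.mp h1 with h | h | h
    · omega
    · exact h
    · nlinarith [h.1]
  have hmc : z * (starRingEnd ℂ) z = 1 := by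
    rw [Complex.mul_conj, Complex.normSq_eq_norm_sq, habs]
    norm_num
  have hconjz : (starRingEnd ℂ) z = z⁻¹ := (inv_eq_of_mul_eq_one_right hmc).symm
  -- the element y of Gt with value z
  set y : Gt := ⟨z, hz⟩ with hy
  have hyv : (y : ℂ) = z := rfl
  have hσy : (σ y : ℂ) = z ^ e1 := hmap y rfl
  -- σ.symm y = y ^ e2
  have hkey : σ (y ^ e2) = y := by
    apply Subtype.ext
    show (σ (y ^ e2) : ℂ) = (y : ℂ)
    rw [map_pow, SubmonoidClass.coe_pow, hσy, hyv, ← pow_mul, ht, pow_add, pow_mul,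
      hzN, one_pow, pow_one, mul_one]
  have hsymm : σ.symm y = y ^ e2 := by
    apply σ.injective
    rw [AlgEquiv.apply_symm_apply, hkey]
  have hfix' : ∀ x : Gt, (x : ℂ) ∈ G → σ.symm x = x := by
    intro x hx
    conv_lhs => rw [← hfix x hx]
    exact σ.symm_apply_apply x
  -- the new automorphism
  refine ⟨c.trans (σ.symm.trans c), ?_, ?_⟩
  · intro x hx
    apply Subtype.ext
    have h1 : (c x : ℂ) ∈ G := by
      rw [hcval]; exact hcG _ hx
    have h2 : σ.symm (c x) = c x := hfix' _ h1
    show (c (σ.symm (c x)) : ℂ) = (x : ℂ)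
    rw [h2, hcval, hcval, Complex.conj_conj]
  · intro x hx
    have hxy : x = y := Subtype.ext hx
    rw [hxy]
    show (c (σ.symm (c y)) : ℂ) = z ^ e2
    have hcy : c y = y⁻¹ := by
      apply Subtype.ext
      rw [hcval, IntermediateField.coe_inv, hyv, hconjz]
    rw [hcy, map_inv₀, hsymm, hcval, IntermediateField.coe_inv,
      SubmonoidClass.coe_pow, hyv, map_inv₀, map_pow, hconjz]
    simp

/-- For `f ≥ 2` and `d` odd, `σ_1` extends to an automorphism of `G̃_{k,n,d}` over
`G_{k,n,d}` iff `σ_3` does, i.e. `c^{(1)}(k,n,d) = c^{(3)}(k,n,d)`. Here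
`k = 2^f(4l+ε)` with `ε ∈ {1,3}`. -/
theorem sigma_extension_iff_of_two_le (a : ℕ) (ha : 0 < a)
    (hpow : ∀ h, 2 ≤ h → ¬∃ b : ℕ, b ^ h = a)
    (f l : ℕ) (hf : 2 ≤ f) (ε : ℕ) (hε : ε = 1 ∨ ε = 3)
    (k : ℕ) (hk : k = 2 ^ f * (4 * l + ε))
    (n d : ℕ) (hn : Squarefree n) (hd : d ∣ ∏ p ∈ k.primeFactors, p)
    (hdodd : Odd d)
    (G Gt : IntermediateField ℚ ℂ)
    (hG : G = IntermediateField.adjoin ℚ {rootC a (k * n), zet n, zet (k * d)})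
    (hGt : Gt = IntermediateField.adjoin ℚ
      {rootC a (k * n), zet n, zet (k * d), zet (2 ^ (f + 2))}) :
    HasSigmaExt G Gt (zet (2 ^ (f + 2))) (zet (2 ^ (f + 2)) ^ (1 + 2 ^ f)) ↔
      HasSigmaExt G Gt (zet (2 ^ (f + 2))) (zet (2 ^ (f + 2)) ^ (1 + 3 * 2 ^ f)) := by
  -- conjugation stability of the generating sets
  have hstab : ∀ (S : Set ℂ), (∀ s ∈ S, s = rootC a (k * n) ∨ ∃ m : ℕ, s = zet m) →
      (adjoin ℚ S).map conjQ.toAlgHom = adjoin ℚ S := by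
    intro S hS
    apply map_conjQ_adjoin_eq
    intro s hs
    rcases hS s hs with h | ⟨m, h⟩
    · rw [h, conj_rootC, ← h]
      exact subset_adjoin ℚ S hs
    · rw [h, conj_zet, ← h]
      exact inv_mem (subset_adjoin ℚ S hs)
  have hGc : G.map conjQ.toAlgHom = G := by
    rw [hG]
    apply hstab
    intro s hs
    simp only [Set.mem_insert_iff, Set.mem_singleton_iff] at hs
    rcases hs with h | h | h
    · exact Or.inl h
    · exact Or.inr ⟨n, h⟩
    · exact Or.inr ⟨k * d, h⟩
  have hGtc : Gt.map conjQ.toAlgHom = Gt := by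
    rw [hGt]
    apply hstab
    intro s hs
    simp only [Set.mem_insert_iff, Set.mem_singleton_iff] at hs
    rcases hs with h | h | h | h
    · exact Or.inl h
    · exact Or.inr ⟨n, h⟩
    · exact Or.inr ⟨k * d, h⟩
    · exact Or.inr ⟨2 ^ (f + 2), h⟩
  -- z = zet (2 ^ (f+2)) lies in Gt
  set N : ℕ := 2 ^ (f + 2) with hNdef
  have hNpos : 0 < N := Nat.pow_pos (by norm_num)
  have hzGt : zet N ∈ Gt := by
    rw [hGt]
    apply subset_adjoin
    simp
  have hzN : (zet N) ^ N = 1 := by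
    have hN0 : (N : ℂ) ≠ 0 := by
      exact_mod_cast hNpos.ne'
    have key : (N : ℂ) * (2 * Real.pi * Complex.I / N) = 2 * Real.pi * Complex.I := by
      field_simp
    rw [zet, ← Complex.exp_nat_mul, key]
    exact Complex.exp_two_pi_mul_I
  -- the congruence (1+2^f)(1+3·2^f) ≡ 1 mod 2^(f+2)
  obtain ⟨g, rfl⟩ : ∃ g, f = g + 2 := ⟨f - 2, by omega⟩
  have harith : (1 + 2 ^ (g + 2)) * (1 + 3 * 2 ^ (g + 2)) =
      1 + N * (1 + 3 * 2 ^ g) := by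
    rw [hNdef]
    have h1 : (g + 2) + 2 = g + 4 := by ring
    rw [h1]
    have h2 : 2 ^ (g + 2) = 4 * 2 ^ g := by rw [pow_add]; ring
    have h4 : 2 ^ (g + 4) = 16 * 2 ^ g := by rw [pow_add]; ring
    rw [h2, h4]
    ring
  constructor
  · exact hasSigmaExt_flip G Gt hGc hGtc (zet N) hzGt N hNpos hzN _ _ _ harith
  · exact hasSigmaExt_flip G Gt hGc hGtc (zet N) hzGt N hNpos hzN _ _ _
      (by rw [mul_comm]; exact harith)
end
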